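/- (Squaring weak set algebras.) Let W = {s : ℕ → ℕ | s(i) = i for all but finitely many i}, and let B be a collection of subsets of W containing W and closed under intersection, complement relative to W, and the operations S_{ij}(X) = {q ∈ W : q ∘ [i,j] ∈ X} and S^i_j(X) = {q ∈ W : q ∘ [i/j] ∈ X} (i ≠ j ∈ ℕ). Then there exist a set M and an injective map g : B → 𝒫(ℕ → M) such that g(W) = (ℕ → M), g(X ∩ Y) = g(X) ∩ g(Y), g(W ∖ X) = (ℕ → M) ∖ g(X), g(S_{ij}(X)) = {q : q ∘ [i,j] ∈ g(X)}, and g(S^i_j(X)) = {q : q ∘ [i/j] ∈ g(X)} for all X, Y ∈ B and all i ≠ j ∈ ℕ. Thus every subalgebra of the full weak set algebra is isomorphic to a subalgebra of a full square set algebra. -/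

import Mathlib

/-- The replacement `[i/j] : ℕ → ℕ`, sending `i` to `j` and fixing everything else. -/
def replacement (i j : ℕ) : ℕ → ℕ := fun k => if k = i then j else k

/-- The weak space over `ℕ`: sequences agreeing with the identity at all but finitely
many coordinates. -/
def weakSpace : Set (ℕ → ℕ) := {s : ℕ → ℕ | {i : ℕ | s i ≠ i}.Finite}

/-!
Send `X ⊆ W` to the set of `q : ℕ → ℕ` whose truncations `truncate q n ∈ W` lie in `X` for almost
all `n` with respect to a nonprincipal ultrafilter on `ℕ`. A point of `W` coincides with its own
truncations from some `n` on, so the map is injective on subsets of `W`; truncating at large `n`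
commutes with precomposition by any element of `W`, which gives the substitution clauses; and the
ultrafilter turns the complement relative to `W` into the plain complement.
-/

open Filter

namespace weakSpace

def truncate (q : ℕ → ℕ) (n : ℕ) : ℕ → ℕ := fun k => if k < n then q k else k

theorem truncate_mem (q : ℕ → ℕ) (n : ℕ) : truncate q n ∈ weakSpace :=
  (Set.finite_Iio n).subset fun k hk => by
    by_contra hkn
    exact hk (if_neg hkn)

theorem exists_forall_ge_eq_self {s : ℕ → ℕ} (hs : s ∈ weakSpace) :
    ∃ N, ∀ k, N ≤ k → s k = k := by
  obtain ⟨N, hN⟩ := Set.Finite.bddAbove hs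
  exact ⟨N + 1, fun k hk => by_contra fun hne => by have := hN hne; omega⟩

theorem eventually_truncate_eq {s : ℕ → ℕ} (hs : s ∈ weakSpace) :
    ∀ᶠ n in cofinite, truncate s n = s := by
  obtain ⟨N, hN⟩ := exists_forall_ge_eq_self hs
  rw [Nat.cofinite_eq_atTop, eventually_atTop]
  refine ⟨N, fun n hn => funext fun k => ?_⟩
  by_cases hk : k < n
  · exact if_pos hk
  · rw [truncate, if_neg hk, hN k (by omega)]

theorem truncate_comp {q f : ℕ → ℕ} {n : ℕ} (hlt : ∀ k < n, f k < n)
    (hge : ∀ k, n ≤ k → f k = k) : truncate q n ∘ f = truncate (q ∘ f) n := by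
  funext k
  by_cases hk : k < n
  · simp [truncate, hk, hlt k hk]
  · simp [truncate, hk, hge k (by omega)]

theorem eventually_truncate_comp (q : ℕ → ℕ) {f : ℕ → ℕ} (hf : f ∈ weakSpace) :
    ∀ᶠ n in cofinite, truncate q n ∘ f = truncate (q ∘ f) n := by
  obtain ⟨N, hN⟩ := exists_forall_ge_eq_self hf
  obtain ⟨M, hM⟩ := ((Set.finite_Iio N).image f).bddAbove
  rw [Nat.cofinite_eq_atTop, eventually_atTop]
  refine ⟨N + M + 1, fun n hn => truncate_comp (fun k hk => ?_) fun k hk => hN k (by omega)⟩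
  by_cases hkN : k < N
  · have := hM ⟨k, hkN, rfl⟩
    omega
  · rw [hN k (by omega)]
    exact hk

theorem swap_mem (i j : ℕ) : ⇑(Equiv.swap i j) ∈ weakSpace :=
  (Set.toFinite {i, j}).subset fun k hk => by
    by_contra hkij
    simp only [Set.mem_insert_iff, Set.mem_singleton_iff, not_or] at hkij
    exact hk (Equiv.swap_apply_of_ne_of_ne hkij.1 hkij.2)

theorem replacement_mem (i j : ℕ) : replacement i j ∈ weakSpace :=
  (Set.finite_singleton i).subset fun k hk => by
    by_contra hki
    exact hk (if_neg hki)

def lift (l : Filter ℕ) (X : Set (ℕ → ℕ)) : Set (ℕ → ℕ) :=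
  {q | ∀ᶠ n in l, truncate q n ∈ X}

variable {l : Filter ℕ}

theorem lift_weakSpace : lift l weakSpace = Set.univ :=
  Set.eq_univ_of_forall fun q => Eventually.of_forall (truncate_mem q)

theorem lift_inter (X Y : Set (ℕ → ℕ)) : lift l (X ∩ Y) = lift l X ∩ lift l Y :=
  Set.ext fun _ => eventually_and

theorem lift_diff (U : Ultrafilter ℕ) (X : Set (ℕ → ℕ)) :
    lift U (weakSpace \ X) = Set.univ \ lift U X := by
  ext q
  simp only [lift, Set.mem_ofPred_eq, Set.mem_sdiff, truncate_mem, true_and, Set.mem_univ]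
  exact Ultrafilter.eventually_not

theorem mem_lift_iff [l.NeBot] (hl : l ≤ cofinite) {X : Set (ℕ → ℕ)} {s : ℕ → ℕ}
    (hs : s ∈ weakSpace) : s ∈ lift l X ↔ s ∈ X :=
  (eventually_congr (((eventually_truncate_eq hs).filter_mono hl).mono fun n hn => by
    rw [hn])).trans eventually_const

theorem inter_lift [l.NeBot] (hl : l ≤ cofinite) {X : Set (ℕ → ℕ)} (hX : X ⊆ weakSpace) :
    weakSpace ∩ lift l X = X :=
  Set.ext fun _ => ⟨fun hs => (mem_lift_iff hl hs.1).mp hs.2,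
    fun hs => ⟨hX hs, (mem_lift_iff hl (hX hs)).mpr hs⟩⟩

theorem lift_injOn [l.NeBot] (hl : l ≤ cofinite) : Set.InjOn (lift l) {X | X ⊆ weakSpace} :=
  fun X hX Y hY hXY => by rw [← inter_lift hl hX, hXY, inter_lift hl hY]

theorem lift_precomp (hl : l ≤ cofinite) {f : ℕ → ℕ} (hf : f ∈ weakSpace) (X : Set (ℕ → ℕ)) :
    lift l {q ∈ weakSpace | q ∘ f ∈ X} = {q | q ∘ f ∈ lift l X} := by
  ext q
  simp only [lift, Set.mem_ofPred_eq, truncate_mem, true_and]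
  exact eventually_congr (((eventually_truncate_comp q hf).filter_mono hl).mono fun n hn => by
    rw [hn])

end weakSpace

theorem weak_set_algebra_squared_general
    (B : Set (Set (ℕ → ℕ)))
    (hBsub : ∀ X ∈ B, X ⊆ weakSpace) :
    ∃ (M : Type) (g : Set (ℕ → ℕ) → Set (ℕ → M)),
      (∀ X ∈ B, ∀ Y ∈ B, g X = g Y → X = Y) ∧
      g weakSpace = Set.univ ∧
      (∀ X ∈ B, ∀ Y ∈ B, g (X ∩ Y) = g X ∩ g Y) ∧
      (∀ X ∈ B, g (weakSpace \ X) = Set.univ \ g X) ∧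
      (∀ X ∈ B, ∀ i j : ℕ, i ≠ j →
        g {q ∈ weakSpace | q ∘ (Equiv.swap i j) ∈ X}
          = {q : ℕ → M | q ∘ (Equiv.swap i j) ∈ g X}) ∧
      (∀ X ∈ B, ∀ i j : ℕ, i ≠ j →
        g {q ∈ weakSpace | q ∘ (replacement i j) ∈ X}
          = {q : ℕ → M | q ∘ (replacement i j) ∈ g X}) := by
  have hU : (hyperfilter ℕ : Filter ℕ) ≤ cofinite := hyperfilter_le_cofinite
  refine ⟨ℕ, weakSpace.lift (hyperfilter ℕ), fun X hX Y hY =>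
    weakSpace.lift_injOn hU (hBsub X hX) (hBsub Y hY), weakSpace.lift_weakSpace,
    fun X _ Y _ => weakSpace.lift_inter X Y, fun X _ => weakSpace.lift_diff _ X,
    fun X _ i j _ => weakSpace.lift_precomp hU (weakSpace.swap_mem i j) X,
    fun X _ i j _ => weakSpace.lift_precomp hU (weakSpace.replacement_mem i j) X⟩

/-- squaring weak set algebras: any collection `B` of subsets of the weak
space `W`, containing `W` and closed under intersection, complement relative to `W`, and
the substitution operations `S_{ij}` and `S^i_j`, embeds (injectively on `B`, preserving
all the operations) into the full square set algebra over some base `M`. -/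
theorem weak_set_algebra_squared
    (B : Set (Set (ℕ → ℕ)))
    (hBsub : ∀ X ∈ B, X ⊆ weakSpace)
    (hBtop : weakSpace ∈ B)
    (hBinter : ∀ X ∈ B, ∀ Y ∈ B, X ∩ Y ∈ B)
    (hBcompl : ∀ X ∈ B, weakSpace \ X ∈ B)
    (hBt : ∀ X ∈ B, ∀ i j : ℕ, i ≠ j →
      {q ∈ weakSpace | q ∘ (Equiv.swap i j) ∈ X} ∈ B)
    (hBr : ∀ X ∈ B, ∀ i j : ℕ, i ≠ j →
      {q ∈ weakSpace | q ∘ (replacement i j) ∈ X} ∈ B) :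
    ∃ (M : Type) (g : Set (ℕ → ℕ) → Set (ℕ → M)),
      (∀ X ∈ B, ∀ Y ∈ B, g X = g Y → X = Y) ∧
      g weakSpace = Set.univ ∧
      (∀ X ∈ B, ∀ Y ∈ B, g (X ∩ Y) = g X ∩ g Y) ∧
      (∀ X ∈ B, g (weakSpace \ X) = Set.univ \ g X) ∧
      (∀ X ∈ B, ∀ i j : ℕ, i ≠ j →
        g {q ∈ weakSpace | q ∘ (Equiv.swap i j) ∈ X}
          = {q : ℕ → M | q ∘ (Equiv.swap i j) ∈ g X}) ∧
      (∀ X ∈ B, ∀ i j : ℕ, i ≠ j →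
        g {q ∈ weakSpace | q ∘ (replacement i j) ∈ X}
          = {q : ℕ → M | q ∘ (replacement i j) ∈ g X}) :=
  weak_set_algebra_squared_general B hBsub
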